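/- arXiv:1104.0089 — 2 statements merged into one kernel-verified Lean document; each statement's English description precedes it below -/
import Mathlib

section
/- Let g : ℝ → ℝ be a C^{k+1} function and p an integer with p > k+1. Then the (k+1)-st derivative of g^p has the form d^{k+1}(g^p)/dx^{k+1}(x) = Σ_{j=1}^{k+1} [p!/(p−j)!] · g(x)^{p−j} · φ_j(x), where φ_1, …, φ_{k+1} are continuous functions of x depending only on g and its first k+1 derivatives (not on p). -/
/-! Differentiating a term `p(p-1)⋯(p-j+1) · g^(p-j) · φ` produces
`p(p-1)⋯(p-j) · g^(p-j-1) · (φ · g') + p(p-1)⋯(p-j+1) · g^(p-j) · φ'`: the falling factorial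
absorbs the exponent `p - j` that differentiation brings down. Hence the coefficients `φ n j` of
`(g^p)^(n)` obey the recursion `φ (n+1) (j+1) = (φ n (j+1))' + φ n j · g'`, in which `p` does not
occur, and `φ n j` is `C^(N-n)` when `g` is `C^N`. -/

open Real

open Finset

/-- `powDerivCoeff g n j` is the partial Bell polynomial `B_{n,j}(g', g'', …)`. -/
noncomputable def powDerivCoeff (g : ℝ → ℝ) : ℕ → ℕ → ℝ → ℝ
  | 0, 0 => fun _ => 1
  | 0, _ + 1 => 0
  | _ + 1, 0 => 0
  | n + 1, j + 1 => deriv (powDerivCoeff g n (j + 1)) + powDerivCoeff g n j * deriv g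

section powDerivCoeff

variable {g : ℝ → ℝ}

theorem powDerivCoeff_eq_zero_of_lt {n j : ℕ} (h : n < j) : powDerivCoeff g n j = 0 := by
  induction n generalizing j with
  | zero =>
    obtain ⟨j, rfl⟩ := Nat.exists_eq_add_one_of_ne_zero h.ne'
    simp [powDerivCoeff]
  | succ n ih =>
    obtain ⟨j, rfl⟩ := Nat.exists_eq_add_one_of_ne_zero (by omega : j ≠ 0)
    simp [powDerivCoeff, ih (by omega : n < j), ih (by omega : n < j + 1)]

theorem deriv_powDerivCoeff_zero (n : ℕ) : deriv (powDerivCoeff g n 0) = 0 := by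
  cases n <;> ext <;> simp [powDerivCoeff]

theorem contDiff_powDerivCoeff {m : WithTop ℕ∞} {n : ℕ} (hg : ContDiff ℝ (m + n) g) (j : ℕ) :
    ContDiff ℝ m (powDerivCoeff g n j) := by
  induction n generalizing m j with
  | zero =>
    cases j
    · exact contDiff_const
    · exact contDiff_zero_fun
  | succ n ih =>
    cases j with
    | zero => exact contDiff_zero_fun
    | succ j =>
      have hg' : ContDiff ℝ (m + 1 + n) g := by simpa [add_right_comm, add_assoc] using hg
      have hg'' : ContDiff ℝ (m + n + 1) g := by simpa [add_assoc] using hg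
      exact (ih hg' _).deriv'.add
        (((ih hg' j).of_le le_self_add).mul (hg''.deriv'.of_le le_self_add))

end powDerivCoeff

theorem hasDerivAt_descFactorial_mul_pow_mul {g ψ : ℝ → ℝ} {g' ψ' x : ℝ}
    (hg : HasDerivAt g g' x) (hψ : HasDerivAt ψ ψ' x) (p j : ℕ) :
    HasDerivAt (fun y => (p.descFactorial j : ℝ) * g y ^ (p - j) * ψ y)
      ((p.descFactorial (j + 1) : ℝ) * g x ^ (p - (j + 1)) * (ψ x * g')
        + (p.descFactorial j : ℝ) * g x ^ (p - j) * ψ') x := by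
  refine (((hg.fun_pow (p - j)).const_mul (p.descFactorial j : ℝ)).fun_mul hψ).congr_deriv ?_
  rw [Nat.descFactorial_succ, ← Nat.sub_sub]
  push_cast
  ring

theorem Finset.sum_range_succ_shift {M : Type*} [AddCommMonoid M] (f : ℕ → M) (n : ℕ)
    (h0 : f 0 = 0) (hn : f (n + 1) = 0) :
    ∑ j ∈ range (n + 1), f (j + 1) = ∑ j ∈ range (n + 1), f j := by
  rw [← add_zero (∑ j ∈ range (n + 1), f (j + 1)), ← h0, ← sum_range_succ', sum_range_succ, hn,
    add_zero]

theorem iteratedDeriv_pow_eq_sum {g : ℝ → ℝ} {n : ℕ} (hg : ContDiff ℝ n g) (p : ℕ) :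
    iteratedDeriv n (fun t => g t ^ p) = fun x =>
      ∑ j ∈ range (n + 1), (p.descFactorial j : ℝ) * g x ^ (p - j) * powDerivCoeff g n j x := by
  induction n with
  | zero => ext x; simp [powDerivCoeff]
  | succ n ih =>
    have hg1 : Differentiable ℝ g := hg.differentiable (by simp)
    have hφ (j : ℕ) : Differentiable ℝ (powDerivCoeff g n j) :=
      (contDiff_powDerivCoeff (m := 1) (by rwa [add_comm]) j).differentiable one_ne_zero
    rw [iteratedDeriv_succ, ih (hg.of_le (by norm_cast; omega))]
    ext x
    rw [(HasDerivAt.fun_sum fun j _ => hasDerivAt_descFactorial_mul_pow_mul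
      (hg1 x).hasDerivAt (hφ j x).hasDerivAt p j).deriv, sum_add_distrib]
    conv_rhs => rw [sum_range_succ']
    simp only [powDerivCoeff, Pi.add_apply, Pi.mul_apply, Pi.zero_apply, mul_zero, add_zero,
      mul_add, sum_add_distrib]
    rw [sum_range_succ_shift
      (fun j => (p.descFactorial j : ℝ) * g x ^ (p - j) * deriv (powDerivCoeff g n j) x) n
      (by simp [deriv_powDerivCoeff_zero]) (by simp [powDerivCoeff_eq_zero_of_lt])]
    exact add_comm _ _

theorem stmt_3 (k : ℕ) (g : ℝ → ℝ) (hg : ContDiff ℝ (k + 1) g) :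
    ∃ φ : ℕ → ℝ → ℝ, (∀ j ∈ Finset.Icc 1 (k + 1), Continuous (φ j)) ∧
      ∀ p : ℕ, k + 1 < p → ∀ x : ℝ,
        iteratedDeriv (k + 1) (fun t => g t ^ p) x
          = ∑ j ∈ Finset.Icc 1 (k + 1),
              (p.descFactorial j : ℝ) * g x ^ (p - j) * φ j x := by
  refine ⟨powDerivCoeff g (k + 1), fun j _ => ?_, fun p _ x => ?_⟩
  · exact (contDiff_powDerivCoeff (m := 0) (by simpa using hg) j).continuous
  · rw [iteratedDeriv_pow_eq_sum hg]
    beta_reduce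
    rw [sum_range_eq_add_Ico _ (by omega), Ico_add_one_right_eq_Icc]
    simp [powDerivCoeff]
end

section
/- Let X₁, …, X_n be independent centered real random variables such that for some constant C > 0 and all i and all integers k ≥ 2, E|X_i|^k ≤ k!·C^{k−2}·E[X_i²]. Then for every ε > 0, P(|Σ_{i=1}^n X_i| > ε·√(Σ E[X_i²])) ≤ 2·exp(−ε²/(4 + 2εC/√(Σ E[X_i²]))). -/
/-!
Expanding `exp (t X)` as a power series, the Bernstein moment condition bounds the terms of order
`k ≥ 2` by a geometric series, so `E[exp (t Xᵢ)] ≤ 1 + t² E[Xᵢ²] / (1 - |t| C) ≤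
exp (t² E[Xᵢ²] / (1 - |t| C))` for `|t| C < 1` (the term of order one vanishes because `Xᵢ` is
centred). By independence the moment generating function of the sum is bounded by
`exp (t² V / (1 - |t| C))`, and the Chernoff bound applied to `± ∑ Xᵢ` with
`t = ε / (2 √V + ε C)` gives the stated two-sided tail estimate.
-/

open MeasureTheory ProbabilityTheory

lemma Real.exp_eq_tsum_pow_div_factorial (x : ℝ) :
    Real.exp x = ∑' k : ℕ, x ^ k / k.factorial := by
  rw [Real.exp_eq_exp_ℝ, NormedSpace.exp_eq_tsum_div]

namespace MeasureTheory

variable {α E : Type*} [MeasurableSpace α] {μ : Measure α} [NormedAddCommGroup E]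

lemma integrable_of_eq_tsum {F : ℕ → α → E} {g : α → E} (hg : AEStronglyMeasurable g μ)
    (hF_int : ∀ k, Integrable (F k) μ) (hF_sum : Summable fun k ↦ ∫ a, ‖F k a‖ ∂μ)
    (hgF : ∀ a, g a = ∑' k, F k a) : Integrable g μ := by
  refine ⟨hg, ?_⟩
  calc ∫⁻ a, ‖g a‖ₑ ∂μ ≤ ∫⁻ a, ∑' k, ‖F k a‖ₑ ∂μ :=
        lintegral_mono fun a ↦ (hgF a).symm ▸ enorm_tsum_le_tsum_enorm
    _ = ∑' k, ENNReal.ofReal (∫ a, ‖F k a‖ ∂μ) := by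
        rw [lintegral_tsum fun k ↦ (hF_int k).aestronglyMeasurable.enorm]
        simp_rw [ofReal_integral_norm_eq_lintegral_enorm (hF_int _)]
    _ = ENNReal.ofReal (∑' k, ∫ a, ‖F k a‖ ∂μ) :=
        (ENNReal.ofReal_tsum_of_nonneg (fun k ↦ integral_nonneg fun a ↦ norm_nonneg _) hF_sum).symm
    _ < ⊤ := ENNReal.ofReal_lt_top

end MeasureTheory

namespace ProbabilityTheory

variable {Ω : Type*} [MeasurableSpace Ω] {μ : Measure Ω} {Y : Ω → ℝ} {C t : ℝ}

lemma integrable_abs_pow_of_forall_two_le [IsFiniteMeasure μ] (hY : AEStronglyMeasurable Y μ)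
    (hint : ∀ k : ℕ, 2 ≤ k → Integrable (fun ω ↦ |Y ω| ^ k) μ) :
    ∀ k : ℕ, Integrable (fun ω ↦ |Y ω| ^ k) μ
  | 0 => by simp
  | 1 => by
    have hY2 : Integrable (fun ω ↦ Y ω ^ 2) μ := by simpa only [sq_abs] using hint 2 le_rfl
    simpa using ((memLp_two_iff_integrable_sq hY).2 hY2).integrable one_le_two |>.abs
  | k + 2 => hint (k + 2) (by omega)

lemma norm_mul_pow_div_factorial (t y : ℝ) (k : ℕ) :
    ‖(t * y) ^ k / k.factorial‖ = |t| ^ k / k.factorial * |y| ^ k := by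
  rw [Real.norm_eq_abs, abs_div, abs_pow, abs_mul, mul_pow, Nat.abs_cast]; ring

lemma integral_norm_pow_div_factorial_le
    (hmom : ∀ k : ℕ, 2 ≤ k →
      ∫ ω, |Y ω| ^ k ∂μ ≤ (k.factorial : ℝ) * C ^ (k - 2) * ∫ ω, Y ω ^ 2 ∂μ) (j : ℕ) :
    ∫ ω, ‖(t * Y ω) ^ (j + 2) / (j + 2).factorial‖ ∂μ
      ≤ (∫ ω, Y ω ^ 2 ∂μ) * t ^ 2 * (|t| * C) ^ j := by
  have hfac : (0 : ℝ) < (j + 2).factorial := mod_cast Nat.factorial_pos _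
  simp_rw [norm_mul_pow_div_factorial]
  rw [integral_const_mul]
  calc |t| ^ (j + 2) / (j + 2).factorial * ∫ ω, |Y ω| ^ (j + 2) ∂μ
      ≤ |t| ^ (j + 2) / (j + 2).factorial
          * ((j + 2).factorial * C ^ j * ∫ ω, Y ω ^ 2 ∂μ) := by
        gcongr; simpa using hmom (j + 2) (by omega)
    _ = (∫ ω, Y ω ^ 2 ∂μ) * t ^ 2 * (|t| * C) ^ j := by
        rw [pow_add, sq_abs, mul_pow]; field_simp

theorem integrable_exp_mul_and_mgf_le_of_moment_bound [IsProbabilityMeasure μ]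
    (hY : AEStronglyMeasurable Y μ)
    (hcen : ∫ ω, Y ω ∂μ = 0) (hint : ∀ k : ℕ, 2 ≤ k → Integrable (fun ω ↦ |Y ω| ^ k) μ)
    (hC : 0 ≤ C) (hmom : ∀ k : ℕ, 2 ≤ k →
      ∫ ω, |Y ω| ^ k ∂μ ≤ (k.factorial : ℝ) * C ^ (k - 2) * ∫ ω, Y ω ^ 2 ∂μ)
    (htC : |t| * C < 1) :
    Integrable (fun ω ↦ Real.exp (t * Y ω)) μ ∧
      mgf Y μ t ≤ Real.exp (t ^ 2 * (∫ ω, Y ω ^ 2 ∂μ) / (1 - |t| * C)) := by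
  set σ2 := ∫ ω, Y ω ^ 2 ∂μ
  set G : ℕ → Ω → ℝ := fun k ω ↦ (t * Y ω) ^ k / k.factorial with hG
  have hG_int (k : ℕ) : Integrable (G k) μ :=
    ((integrable_abs_pow_of_forall_two_le hY hint k).const_mul _).mono'
      (by fun_prop) (ae_of_all _ fun ω ↦ (norm_mul_pow_div_factorial t (Y ω) k).le)
  have hr : 0 ≤ |t| * C := by positivity
  have hgeom : Summable fun j : ℕ ↦ σ2 * t ^ 2 * (|t| * C) ^ j :=
    (summable_geometric_of_lt_one hr htC).mul_left _
  have htail (j : ℕ) : ∫ ω, ‖G (j + 2) ω‖ ∂μ ≤ σ2 * t ^ 2 * (|t| * C) ^ j :=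
    integral_norm_pow_div_factorial_le hmom j
  have hG_sum : Summable fun k ↦ ∫ ω, ‖G k ω‖ ∂μ :=
    (summable_nat_add_iff 2).mp <|
      hgeom.of_nonneg_of_le (fun _ ↦ integral_nonneg fun _ ↦ norm_nonneg _) htail
  have hexp (ω : Ω) : Real.exp (t * Y ω) = ∑' k, G k ω :=
    Real.exp_eq_tsum_pow_div_factorial _
  have hmgf : mgf Y μ t = ∑' k, ∫ ω, G k ω ∂μ := by
    simp_rw [mgf, hexp]
    exact (integral_tsum_of_summable_integral_norm hG_int hG_sum).symm
  have hI_sum : Summable fun k ↦ ∫ ω, G k ω ∂μ :=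
    hG_sum.of_norm_bounded fun k ↦ norm_integral_le_integral_norm _
  have hG0 : ∫ ω, G 0 ω ∂μ = 1 := by simp [hG]
  have hG1 : ∫ ω, G 1 ω ∂μ = 0 := by simp [hG, integral_const_mul, hcen]
  refine ⟨integrable_of_eq_tsum (by fun_prop) hG_int hG_sum hexp, ?_⟩
  calc mgf Y μ t = 1 + ∑' j, ∫ ω, G (j + 2) ω ∂μ := by
        rw [hmgf, ← hI_sum.sum_add_tsum_nat_add 2]
        simp [Finset.sum_range_succ, hG0, hG1]
    _ ≤ 1 + ∑' j : ℕ, σ2 * t ^ 2 * (|t| * C) ^ j := by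
        gcongr 1 + ?_
        exact Summable.tsum_le_tsum
          (fun j ↦ (le_abs_self _).trans ((norm_integral_le_integral_norm _).trans (htail j)))
          ((summable_nat_add_iff 2).mpr hI_sum) hgeom
    _ = 1 + t ^ 2 * σ2 / (1 - |t| * C) := by
        rw [tsum_mul_left, tsum_geometric_of_lt_one hr htC]; ring
    _ ≤ Real.exp (t ^ 2 * σ2 / (1 - |t| * C)) := by
        linarith [Real.add_one_le_exp (t ^ 2 * σ2 / (1 - |t| * C))]

theorem iIndepFun.integrable_exp_mul_sum_and_mgf_sum_le {ι : Type*} [Fintype ι] {X : ι → Ω → ℝ}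
    (hmeas : ∀ i, Measurable (X i)) (hindep : iIndepFun X μ) (hcen : ∀ i, ∫ ω, X i ω ∂μ = 0)
    (hint : ∀ i, ∀ k : ℕ, 2 ≤ k → Integrable (fun ω ↦ |X i ω| ^ k) μ) (hC : 0 ≤ C)
    (hmom : ∀ i, ∀ k : ℕ, 2 ≤ k →
      ∫ ω, |X i ω| ^ k ∂μ ≤ (k.factorial : ℝ) * C ^ (k - 2) * ∫ ω, X i ω ^ 2 ∂μ)
    (htC : |t| * C < 1) :
    Integrable (fun ω ↦ Real.exp (t * ∑ i, X i ω)) μ ∧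
      mgf (fun ω ↦ ∑ i, X i ω) μ t
        ≤ Real.exp (t ^ 2 * (∑ i, ∫ ω, X i ω ^ 2 ∂μ) / (1 - |t| * C)) := by
  have := hindep.isProbabilityMeasure
  have hX i := integrable_exp_mul_and_mgf_le_of_moment_bound (hmeas i).aestronglyMeasurable
    (hcen i) (hint i) hC (hmom i) htC
  have hsum : (fun ω ↦ ∑ i, X i ω) = ∑ i, X i := by ext; simp
  refine ⟨by simpa using hindep.integrable_exp_mul_sum hmeas fun i _ ↦ (hX i).1, ?_⟩
  calc mgf (fun ω ↦ ∑ i, X i ω) μ t = ∏ i, mgf (X i) μ t := by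
        rw [hsum, hindep.mgf_sum hmeas]
    _ ≤ ∏ i, Real.exp (t ^ 2 * (∫ ω, X i ω ^ 2 ∂μ) / (1 - |t| * C)) :=
        Finset.prod_le_prod (fun i _ ↦ mgf_nonneg) fun i _ ↦ (hX i).2
    _ = Real.exp (t ^ 2 * (∑ i, ∫ ω, X i ω ^ 2 ∂μ) / (1 - |t| * C)) := by
        rw [← Real.exp_sum, ← Finset.sum_div, ← Finset.mul_sum]

lemma measureReal_abs_gt_le_of_mgf_le [IsFiniteMeasure μ] {S : Ω → ℝ} {a M : ℝ} (ht : 0 ≤ t)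
    (hint_pos : Integrable (fun ω ↦ Real.exp (t * S ω)) μ)
    (hint_neg : Integrable (fun ω ↦ Real.exp (-t * S ω)) μ)
    (hmgf_pos : mgf S μ t ≤ M) (hmgf_neg : mgf S μ (-t) ≤ M) :
    μ.real {ω | a < |S ω|} ≤ 2 * (Real.exp (-t * a) * M) := by
  have hsub : {ω | a < |S ω|} ⊆ {ω | a ≤ S ω} ∪ {ω | S ω ≤ -a} := fun ω hω ↦ by
    rcases lt_abs.mp (show a < |S ω| from hω) with h | h
    · exact Or.inl h.le
    · exact Or.inr (show S ω ≤ -a by linarith)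
  have hupper : μ.real {ω | a ≤ S ω} ≤ Real.exp (-t * a) * M :=
    (measure_ge_le_exp_mul_mgf a ht hint_pos).trans (by gcongr)
  have hlower : μ.real {ω | S ω ≤ -a} ≤ Real.exp (-t * a) * M := by
    refine (measure_le_le_exp_mul_mgf (-a) (neg_nonpos.mpr ht) hint_neg).trans ?_
    rw [neg_mul_neg]
    gcongr
  calc μ.real {ω | a < |S ω|} ≤ μ.real {ω | a ≤ S ω} + μ.real {ω | S ω ≤ -a} :=
        (measureReal_mono hsub).trans (measureReal_union_le _ _)
    _ ≤ 2 * (Real.exp (-t * a) * M) := by linarith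

end ProbabilityTheory

lemma bernstein_exponent_eq {ε C s : ℝ} (hs : 0 < s) (hεC : 0 ≤ ε * C) :
    -(ε / (2 * s + ε * C)) * (ε * s) + (ε / (2 * s + ε * C)) ^ 2 * s ^ 2
        / (1 - ε / (2 * s + ε * C) * C) = -(ε ^ 2 / (4 + 2 * ε * C / s)) := by
  have h : 0 < 2 * s + ε * C := by positivity
  rw [show 4 + 2 * ε * C / s = 2 * (2 * s + ε * C) / s by field_simp; ring]
  field_simp
  ring

theorem stmt_4_general {Ω : Type*} [MeasureSpace Ω]
    (n : ℕ) (X : Fin n → Ω → ℝ) (hmeas : ∀ i, Measurable (X i))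
    (hindep : iIndepFun X volume)
    (hcen : ∀ i, ∫ ω, X i ω = 0)
    (hint : ∀ i, ∀ k : ℕ, 2 ≤ k → Integrable (fun ω => |X i ω| ^ k))
    (C : ℝ) (hC : 0 < C)
    (hmom : ∀ i, ∀ k : ℕ, 2 ≤ k →
      ∫ ω, |X i ω| ^ k ≤ (k.factorial : ℝ) * C ^ (k - 2) * ∫ ω, (X i ω) ^ 2)
    (V : ℝ) (hV : V = ∑ i, ∫ ω, (X i ω) ^ 2) (hVpos : 0 < V) :
    ∀ ε : ℝ, 0 < ε →
      (volume {ω | ε * Real.sqrt V < |∑ i, X i ω|}).toReal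
        ≤ 2 * Real.exp (-(ε ^ 2 / (4 + 2 * ε * C / Real.sqrt V))) := by
  intro ε hε
  have := hindep.isProbabilityMeasure
  set s := Real.sqrt V
  have hs : 0 < s := Real.sqrt_pos.mpr hVpos
  have hVs : V = s ^ 2 := (Real.sq_sqrt hVpos.le).symm
  -- with this `t`, `t² V / (1 - t C) = t ε s / 2`, so the Chernoff exponent is `-t ε s / 2`
  set t := ε / (2 * s + ε * C)
  have ht : 0 < t := by positivity
  have htC : |t| * C < 1 := by
    rw [abs_of_pos ht, div_mul_eq_mul_div, div_lt_one (by positivity)]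
    linarith
  obtain ⟨hint_pos, hmgf_pos⟩ :=
    hindep.integrable_exp_mul_sum_and_mgf_sum_le hmeas hcen hint hC.le hmom htC
  obtain ⟨hint_neg, hmgf_neg⟩ :=
    hindep.integrable_exp_mul_sum_and_mgf_sum_le hmeas hcen hint hC.le hmom (t := -t)
      (by rwa [abs_neg])
  rw [neg_sq, abs_neg] at hmgf_neg
  calc (volume {ω | ε * s < |∑ i, X i ω|}).toReal
      ≤ 2 * (Real.exp (-t * (ε * s)) * Real.exp (t ^ 2 * V / (1 - |t| * C))) := by
        rw [hV]
        exact measureReal_abs_gt_le_of_mgf_le ht.le hint_pos hint_neg hmgf_pos hmgf_neg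
    _ = 2 * Real.exp (-(ε ^ 2 / (4 + 2 * ε * C / s))) := by
        rw [← Real.exp_add, abs_of_pos ht, hVs,
          bernstein_exponent_eq hs (by positivity)]

theorem stmt_4 {Ω : Type*} [MeasureSpace Ω] [IsProbabilityMeasure (volume : Measure Ω)]
    (n : ℕ) (X : Fin n → Ω → ℝ) (hmeas : ∀ i, Measurable (X i))
    (hindep : iIndepFun X volume)
    (hcen : ∀ i, ∫ ω, X i ω = 0)
    (hint : ∀ i, ∀ k : ℕ, 2 ≤ k → Integrable (fun ω => |X i ω| ^ k))
    (C : ℝ) (hC : 0 < C)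
    (hmom : ∀ i, ∀ k : ℕ, 2 ≤ k →
      ∫ ω, |X i ω| ^ k ≤ (k.factorial : ℝ) * C ^ (k - 2) * ∫ ω, (X i ω) ^ 2)
    (V : ℝ) (hV : V = ∑ i, ∫ ω, (X i ω) ^ 2) (hVpos : 0 < V) :
    ∀ ε : ℝ, 0 < ε →
      (volume {ω | ε * Real.sqrt V < |∑ i, X i ω|}).toReal
        ≤ 2 * Real.exp (-(ε ^ 2 / (4 + 2 * ε * C / Real.sqrt V))) :=
  stmt_4_general n X hmeas hindep hcen hint C hC hmom V hV hVpos
end
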